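/- arXiv:2102.05834 — 6 statements merged into one kernel-verified Lean document; each statement's English description precedes it below -/
import Mathlib

section
/- Let I ⊆ ℝ be a nonempty open interval and let f : I → ℝ be twice continuously differentiable with f(x) > 0 and f'(x) > 0 for all x ∈ I. If f satisfies the ordinary differential equation 1 + 3 f(x) f''(x) + f'(x)² = 0 on I, then there exist constants a > 0 and d ∈ ℝ such that for every x ∈ I one has a − f(x)^{2/3} > 0 and x = (−f(x)^{2/3} − 2a) · √(a − f(x)^{2/3}) + d. -/
/-!
Multiplying the equation by `(2/3) f' / f^{1/3}` makes it exact: `f^{2/3} (1 + f'^2)` is a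
constant `a`. Hence `a - f^{2/3} = (f^{1/3} f')^2 > 0`, i.e. `√(a - f^{2/3}) = f^{1/3} f'`.
Since `G t = (-t - 2a) √(a - t)` has `G' t = 3t / (2 √(a - t))`, the chain rule gives
`(G ∘ f^{2/3})' = 1`, so `x - G (f(x)^{2/3})` is constant on the interval.
-/

open Real

theorem IsOpen.is_const_of_hasDerivAt_zero {E : Type*} [NormedAddCommGroup E] [NormedSpace ℝ E]
    {I : Set ℝ} (hI : IsOpen I) (hI' : I.OrdConnected) {g : ℝ → E}
    (hg : ∀ x ∈ I, HasDerivAt g 0 x) {x y : ℝ} (hx : x ∈ I) (hy : y ∈ I) : g x = g y :=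
  hI.is_const_of_deriv_eq_zero hI'.isPreconnected
    (fun z hz => (hg z hz).differentiableAt.differentiableWithinAt) (fun z hz => (hg z hz).deriv)
    hx hy

theorem Real.rpow_two_thirds_eq_sq {y : ℝ} (hy : 0 ≤ y) :
    y ^ ((2 : ℝ) / 3) = (y ^ ((1 : ℝ) / 3)) ^ 2 := by
  rw [← rpow_natCast, ← rpow_mul hy]; norm_num

theorem Real.rpow_one_third_pow_three {y : ℝ} (hy : 0 ≤ y) : (y ^ ((1 : ℝ) / 3)) ^ 3 = y := by
  rw [← rpow_natCast, ← rpow_mul hy]; norm_num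

theorem HasDerivAt.rpow_two_thirds {f : ℝ → ℝ} {f' x : ℝ} (hf : HasDerivAt f f' x)
    (hx : 0 < f x) :
    HasDerivAt (fun y => f y ^ ((2 : ℝ) / 3)) (2 / 3 * f' / f x ^ ((1 : ℝ) / 3)) x := by
  convert hf.rpow_const (p := 2 / 3) (Or.inl hx.ne') using 1
  rw [show (2 : ℝ) / 3 - 1 = -(1 / 3) by norm_num, rpow_neg hx.le]
  ring

theorem hasDerivAt_first_integral {f f' : ℝ → ℝ} {f'' x : ℝ} (hf : HasDerivAt f (f' x) x)
    (hf' : HasDerivAt f' f'' x) (hx : 0 < f x) :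
    HasDerivAt (fun y => f y ^ ((2 : ℝ) / 3) * (1 + f' y ^ 2))
      (2 / 3 * f' x / f x ^ ((1 : ℝ) / 3) * (1 + 3 * f x * f'' + f' x ^ 2)) x := by
  refine ((hf.rpow_two_thirds hx).mul ((hf'.pow 2).const_add 1)).congr_deriv ?_
  have hp : 0 < f x ^ ((1 : ℝ) / 3) := rpow_pos_of_pos hx _
  rw [rpow_two_thirds_eq_sq hx.le]
  set p := f x ^ ((1 : ℝ) / 3)
  rw [← rpow_one_third_pow_three hx.le]
  field_simp
  simp only [Pi.pow_apply]
  ring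

theorem hasDerivAt_neg_sub_mul_sqrt {a t : ℝ} (ht : t < a) :
    HasDerivAt (fun s => (-s - 2 * a) * √(a - s)) (3 * t / (2 * √(a - t))) t := by
  refine (((hasDerivAt_id t).neg.sub_const (2 * a)).mul
    (((hasDerivAt_id t).const_sub a).sqrt (sub_pos.2 ht).ne')).congr_deriv ?_
  simp only [Pi.neg_apply, id]
  field_simp
  rw [sq_sqrt (sub_pos.2 ht).le]
  ring

theorem sqrt_rpow_two_thirds_mul_one_add_sq_sub {y y' : ℝ} (hy : 0 < y) (hy' : 0 < y') :
    √(y ^ ((2 : ℝ) / 3) * (1 + y' ^ 2) - y ^ ((2 : ℝ) / 3)) = y ^ ((1 : ℝ) / 3) * y' := by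
  rw [rpow_two_thirds_eq_sq hy.le, ← sqrt_sq (mul_pos (rpow_pos_of_pos hy _) hy').le]
  ring_nf

theorem HasDerivAt.neg_rpow_two_thirds_sub_mul_sqrt {f : ℝ → ℝ} {f' a x : ℝ}
    (hf : HasDerivAt f f' x) (hx : 0 < f x) (hf' : 0 < f')
    (hsqrt : √(a - f x ^ ((2 : ℝ) / 3)) = f x ^ ((1 : ℝ) / 3) * f') :
    HasDerivAt (fun y => (-(f y ^ ((2 : ℝ) / 3)) - 2 * a) * √(a - f y ^ ((2 : ℝ) / 3))) 1
      x := by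
  have hp : 0 < f x ^ ((1 : ℝ) / 3) := rpow_pos_of_pos hx _
  have hgap : f x ^ ((2 : ℝ) / 3) < a := by
    rw [← sub_pos, ← sqrt_pos, hsqrt]
    positivity
  refine ((hasDerivAt_neg_sub_mul_sqrt hgap).comp x (hf.rpow_two_thirds hx)).congr_deriv ?_
  rw [hsqrt, rpow_two_thirds_eq_sq hx.le]
  field_simp

/-- Theorem 1.1 (second factor): if `f` is positive, increasing, twice continuously
differentiable on a nonempty open interval `I` and satisfies `1 + 3 f f'' + f'^2 = 0`,
then there are constants `a > 0` and `d` such that `a - f(x)^(2/3) > 0` and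
`x = (-f(x)^(2/3) - 2a) * sqrt (a - f(x)^(2/3)) + d` on `I`. -/
theorem stmt_0 (I : Set ℝ) (hIopen : IsOpen I) (hIne : I.Nonempty) (hIord : I.OrdConnected)
    (f : ℝ → ℝ) (hf : ContDiffOn ℝ 2 f I)
    (hfpos : ∀ x ∈ I, 0 < f x) (hf'pos : ∀ x ∈ I, 0 < deriv f x)
    (hode : ∀ x ∈ I, 1 + 3 * f x * deriv (deriv f) x + (deriv f x) ^ 2 = 0) :
    ∃ a : ℝ, 0 < a ∧ ∃ d : ℝ, ∀ x ∈ I,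
      0 < a - f x ^ ((2 : ℝ) / 3) ∧
      x = (-(f x ^ ((2 : ℝ) / 3)) - 2 * a) * Real.sqrt (a - f x ^ ((2 : ℝ) / 3)) + d := by
  obtain ⟨x₀, hx₀⟩ := hIne
  have hf₁ : ∀ x ∈ I, HasDerivAt f (deriv f x) x := fun x hx =>
    ((hf.differentiableOn (by norm_num)).differentiableAt (hIopen.mem_nhds hx)).hasDerivAt
  have hf₂ : ∀ x ∈ I, HasDerivAt (deriv f) (deriv (deriv f) x) x := fun x hx =>
    (((hf.deriv_of_isOpen (m := 1) hIopen (by norm_num)).differentiableOn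
      one_ne_zero).differentiableAt (hIopen.mem_nhds hx)).hasDerivAt
  set a := f x₀ ^ ((2 : ℝ) / 3) * (1 + deriv f x₀ ^ 2)
  have hfirst : ∀ x ∈ I, f x ^ ((2 : ℝ) / 3) * (1 + deriv f x ^ 2) = a := fun x hx =>
    hIopen.is_const_of_hasDerivAt_zero hIord (fun y hy => by
      simpa [hode y hy] using
        hasDerivAt_first_integral (hf₁ y hy) (hf₂ y hy) (hfpos y hy)) hx hx₀
  have hsqrt : ∀ x ∈ I, √(a - f x ^ ((2 : ℝ) / 3)) = f x ^ ((1 : ℝ) / 3) * deriv f x :=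
    fun x hx => by
      rw [← hfirst x hx, sqrt_rpow_two_thirds_mul_one_add_sq_sub (hfpos x hx) (hf'pos x hx)]
  have hgap : ∀ x ∈ I, 0 < a - f x ^ ((2 : ℝ) / 3) := fun x hx => by
    rw [← sqrt_pos, hsqrt x hx]
    exact mul_pos (rpow_pos_of_pos (hfpos x hx) _) (hf'pos x hx)
  set G := fun y => (-(f y ^ ((2 : ℝ) / 3)) - 2 * a) * √(a - f y ^ ((2 : ℝ) / 3))
  have hconst : ∀ x ∈ I, HasDerivAt (fun y => y - G y) 0 x := fun x hx =>
    ((hasDerivAt_id' x).sub ((hf₁ x hx).neg_rpow_two_thirds_sub_mul_sqrt (hfpos x hx)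
      (hf'pos x hx) (hsqrt x hx))).congr_deriv (sub_self 1)
  refine ⟨a, by linarith [hgap x₀ hx₀, rpow_nonneg (hfpos x₀ hx₀).le ((2 : ℝ) / 3)],
    x₀ - G x₀, fun x hx => ⟨hgap x hx, ?_⟩⟩
  linarith [hIopen.is_const_of_hasDerivAt_zero hIord hconst hx hx₀]
end

section
/- Let t = (t₁, t₂) ∈ ℝ² and set W² = 1 + t₁² + t₂². If W² > 3, then the symmetric 2×2 matrix with entries a_{εη} = δ_{εη} − t_ε t_η / W² + (2(W² + 3)/((W² − 1)(W² − 3))) · t_ε t_η / W² (ε, η ∈ {1,2}) is positive definite; that is, Σ_{ε,η} a_{εη} ξ_ε ξ_η > 0 for every ξ ∈ ℝ² \ {0}. -/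
/-!
Writing `c = 2(W² + 3)/((W² - 1)(W² - 3))`, the matrix is the rank-one perturbation
`I + a t tᵀ` of the identity with `a = (c - 1)/W²`. By Cauchy–Schwarz such a matrix is positive
definite as soon as `1 + a |t|² > 0`, and here `1 + a |t|² = (1 + c (W² - 1))/W²` with `c > 0`
because `W² > 3`.
-/

open Finset

section RankOnePerturbation

variable {ι : Type*} [Fintype ι]

theorem sum_sq_pos_of_ne_zero {ξ : ι → ℝ} (hξ : ξ ≠ 0) : 0 < ∑ i, ξ i ^ 2 := by
  obtain ⟨i, hi⟩ := Function.ne_iff.mp hξ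
  exact sum_pos' (fun j _ => sq_nonneg (ξ j)) ⟨i, mem_univ i, sq_pos_of_ne_zero hi⟩

theorem sum_sum_one_add_rankOne [DecidableEq ι] (a : ℝ) (t ξ : ι → ℝ) :
    ∑ ε, ∑ η, ((if ε = η then (1 : ℝ) else 0) + a * (t ε * t η)) * ξ ε * ξ η
      = ∑ i, ξ i ^ 2 + a * (∑ i, t i * ξ i) ^ 2 := by
  simp only [add_mul, sum_add_distrib, ite_mul, one_mul, zero_mul, sum_ite_eq, mem_univ,
    if_true, sq, sum_mul_sum]
  congr 1
  rw [mul_sum]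
  exact sum_congr rfl fun i _ => by rw [mul_sum]; exact sum_congr rfl fun j _ => by ring

theorem sum_sq_add_mul_sq_inner_pos {a : ℝ} {t ξ : ι → ℝ} (ha : 0 < 1 + a * ∑ i, t i ^ 2)
    (hξ : ξ ≠ 0) : 0 < ∑ i, ξ i ^ 2 + a * (∑ i, t i * ξ i) ^ 2 := by
  have hξ2 := sum_sq_pos_of_ne_zero hξ
  have cauchySchwarz := sum_mul_sq_le_sq_mul_sq univ t ξ
  rcases le_or_gt 0 a with ha0 | ha0
  · positivity
  · nlinarith [mul_pos ha hξ2]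

end RankOnePerturbation

/-- Ellipticity: when `W² = 1 + t₁² + t₂² > 3`, the coefficient matrix
`a_{εη} = δ_{εη} - t_ε t_η / W² + (2(W²+3)/((W²-1)(W²-3))) t_ε t_η / W²`
of the Kropina minimal-graph equation is positive definite. -/
theorem stmt_5 (t : Fin 2 → ℝ) (W2 : ℝ) (hW2 : W2 = 1 + t 0 ^ 2 + t 1 ^ 2) (h3 : 3 < W2)
    (ξ : Fin 2 → ℝ) (hξ : ξ ≠ 0) :
    0 < ∑ ε : Fin 2, ∑ η : Fin 2,
      ((if ε = η then (1 : ℝ) else 0) - t ε * t η / W2 +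
        (2 * (W2 + 3) / ((W2 - 1) * (W2 - 3))) * (t ε * t η / W2)) * ξ ε * ξ η := by
  set c := 2 * (W2 + 3) / ((W2 - 1) * (W2 - 3))
  have hc : 0 < c := div_pos (by linarith) (mul_pos (by linarith) (by linarith))
  have hW : W2 ≠ 0 := by positivity
  have ht : ∑ i, t i ^ 2 = W2 - 1 := by rw [Fin.sum_univ_two, hW2]; ring
  have ha : 0 < 1 + (c - 1) / W2 * ∑ i, t i ^ 2 := by
    rw [ht, show 1 + (c - 1) / W2 * (W2 - 1) = (1 + c * (W2 - 1)) / W2 by field_simp; ring]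
    exact div_pos (by nlinarith) (by linarith)
  convert sum_sq_add_mul_sq_inner_pos ha hξ using 1
  rw [← sum_sum_one_add_rankOne]
  refine sum_congr rfl fun ε _ => sum_congr rfl fun η _ => ?_
  ring
end

section
/- For every m > 3 there exists a constant 𝒞 ≥ 0 such that for all t, ξ ∈ ℝ² with W² := 1 + |t|² ≥ m, one has 2(W² + 3) ⟨t, ξ⟩² / ((W² − 1)(W² − 3) W²) ≤ 𝒞 · ( |ξ|² − ⟨t, ξ⟩² / W² ). Equivalently, the quadratic form Σ a_{εη} ξ_ε ξ_η with a_{εη} = δ_{εη} − t_ε t_η/W² + (2(W²+3)/((W²−1)(W²−3))) t_ε t_η/W² satisfies Σ h_{εη} ξ_ε ξ_η ≤ Σ a_{εη} ξ_ε ξ_η ≤ (1 + 𝒞) Σ h_{εη} ξ_ε ξ_η, where h_{εη} = δ_{εη} − t_ε t_η/W². -/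
open scoped RealInnerProductSpace

/-!
Write `W² = 1 + |t|²`, `s = ⟨t, ξ⟩` and `h(ξ) = |ξ|² - s² / W²`. Cauchy–Schwarz gives
`s² ≤ |t|² |ξ|²`, hence `h(ξ) ≥ s² / |t|² - s² / W² = s² / ((W² - 1) W²)`. The extra term is
`2 (W² + 3) / (W² - 3)` times this quantity, and `2 (W² + 3) / (W² - 3) = 2 + 12 / (W² - 3)`
decreases in `W²`, so `𝒞 = 2 (m + 3) / (m - 3)` works. In coordinates the two quadratic forms
are `h(ξ)` and `h(ξ)` plus the (nonnegative) extra term, which gives the two-sided bound.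
-/

section InnerProductSpace

variable {E : Type*} [NormedAddCommGroup E] [InnerProductSpace ℝ E]

theorem inner_sq_div_le_norm_sq_sub (t ξ : E) :
    ⟪t, ξ⟫ ^ 2 / (‖t‖ ^ 2 * (1 + ‖t‖ ^ 2)) ≤ ‖ξ‖ ^ 2 - ⟪t, ξ⟫ ^ 2 / (1 + ‖t‖ ^ 2) := by
  have hW : 0 < 1 + ‖t‖ ^ 2 := by positivity
  have hCS : ⟪t, ξ⟫ ^ 2 ≤ ‖t‖ ^ 2 * ‖ξ‖ ^ 2 := by
    rw [← mul_pow, ← sq_abs]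
    exact pow_le_pow_left₀ (abs_nonneg _) (abs_real_inner_le_norm t ξ) 2
  rcases (sq_nonneg ‖t‖).eq_or_lt with ht | ht
  · rw [← ht, zero_mul] at hCS
    rw [← ht, zero_mul, div_zero, add_zero, div_one]
    linarith [sq_nonneg ‖ξ‖]
  · have hsum : ⟪t, ξ⟫ ^ 2 / (‖t‖ ^ 2 * (1 + ‖t‖ ^ 2)) + ⟪t, ξ⟫ ^ 2 / (1 + ‖t‖ ^ 2) =
        ⟪t, ξ⟫ ^ 2 / ‖t‖ ^ 2 := by
      have : ‖t‖ ≠ 0 := fun h => by simp [h] at ht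
      field_simp
    rw [le_sub_iff_add_le, hsum, div_le_iff₀ ht, mul_comm]
    exact hCS

end InnerProductSpace

theorem add_three_div_sub_three_le {m w : ℝ} (hm : 3 < m) (hw : m ≤ w) :
    (w + 3) / (w - 3) ≤ (m + 3) / (m - 3) := by
  rw [div_le_div_iff₀ (by linarith) (by linarith)]
  nlinarith

section Coordinates

variable {ι : Type*} [Fintype ι]

theorem sum_sum_ite_mul_mul [DecidableEq ι] (ξ : EuclideanSpace ℝ ι) :
    ∑ ε, ∑ η, (if ε = η then (1 : ℝ) else 0) * ξ ε * ξ η = ‖ξ‖ ^ 2 := by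
  rw [EuclideanSpace.real_norm_sq_eq]
  simp [sq]

theorem sum_sum_mul_mul_mul_mul (t ξ : EuclideanSpace ℝ ι) :
    ∑ ε, ∑ η, t ε * t η * ξ ε * ξ η = ⟪t, ξ⟫ ^ 2 := by
  simp only [PiLp.inner_apply, RCLike.inner_apply, conj_trivial, sq, Finset.sum_mul_sum]
  exact Finset.sum_congr rfl fun ε _ => Finset.sum_congr rfl fun η _ => by ring

theorem sum_sum_ite_sub_add_mul_mul [DecidableEq ι] (t ξ : EuclideanSpace ℝ ι) (w k : ℝ) :
    ∑ ε, ∑ η, ((if ε = η then (1 : ℝ) else 0) - t ε * t η / w + k * (t ε * t η / w)) *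
      ξ ε * ξ η = ‖ξ‖ ^ 2 - ⟪t, ξ⟫ ^ 2 / w + k * (⟪t, ξ⟫ ^ 2 / w) := by
  rw [← sum_sum_ite_mul_mul, ← sum_sum_mul_mul_mul_mul, Finset.sum_div, Finset.mul_sum,
    ← Finset.sum_sub_distrib, ← Finset.sum_add_distrib]
  refine Finset.sum_congr rfl fun ε _ => ?_
  rw [Finset.sum_div, Finset.mul_sum, ← Finset.sum_sub_distrib, ← Finset.sum_add_distrib]
  exact Finset.sum_congr rfl fun η _ => by ring

theorem sum_sum_ite_sub_mul_mul [DecidableEq ι] (t ξ : EuclideanSpace ℝ ι) (w : ℝ) :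
    ∑ ε, ∑ η, ((if ε = η then (1 : ℝ) else 0) - t ε * t η / w) * ξ ε * ξ η =
      ‖ξ‖ ^ 2 - ⟪t, ξ⟫ ^ 2 / w := by
  simpa using sum_sum_ite_sub_add_mul_mul t ξ w 0

end Coordinates

/-- Bound (5.11): for each `m > 3` there is a constant `𝒞 ≥ 0` such that whenever
`W² = 1 + |t|² ≥ m`, the extra term of the Kropina coefficients is controlled by the
mean-curvature-type form; equivalently `Σ h ξξ ≤ Σ a ξξ ≤ (1+𝒞) Σ h ξξ`. -/
theorem stmt_7 (m : ℝ) (hm : 3 < m) :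
    ∃ C : ℝ, 0 ≤ C ∧ ∀ t ξ : EuclideanSpace ℝ (Fin 2), m ≤ 1 + ‖t‖ ^ 2 →
      (2 * ((1 + ‖t‖ ^ 2) + 3) * ⟪t, ξ⟫ ^ 2 /
          (((1 + ‖t‖ ^ 2) - 1) * ((1 + ‖t‖ ^ 2) - 3) * (1 + ‖t‖ ^ 2)) ≤
        C * (‖ξ‖ ^ 2 - ⟪t, ξ⟫ ^ 2 / (1 + ‖t‖ ^ 2))) ∧
      ((∑ ε : Fin 2, ∑ η : Fin 2,
          ((if ε = η then (1 : ℝ) else 0) - t ε * t η / (1 + ‖t‖ ^ 2)) * ξ ε * ξ η) ≤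
        (∑ ε : Fin 2, ∑ η : Fin 2,
          ((if ε = η then (1 : ℝ) else 0) - t ε * t η / (1 + ‖t‖ ^ 2) +
            (2 * ((1 + ‖t‖ ^ 2) + 3) / (((1 + ‖t‖ ^ 2) - 1) * ((1 + ‖t‖ ^ 2) - 3))) *
              (t ε * t η / (1 + ‖t‖ ^ 2))) * ξ ε * ξ η) ∧
        (∑ ε : Fin 2, ∑ η : Fin 2,
          ((if ε = η then (1 : ℝ) else 0) - t ε * t η / (1 + ‖t‖ ^ 2) +
            (2 * ((1 + ‖t‖ ^ 2) + 3) / (((1 + ‖t‖ ^ 2) - 1) * ((1 + ‖t‖ ^ 2) - 3))) *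
              (t ε * t η / (1 + ‖t‖ ^ 2))) * ξ ε * ξ η) ≤
        (1 + C) * (∑ ε : Fin 2, ∑ η : Fin 2,
          ((if ε = η then (1 : ℝ) else 0) - t ε * t η / (1 + ‖t‖ ^ 2)) * ξ ε * ξ η)) := by
  have hC : 0 ≤ 2 * ((m + 3) / (m - 3)) := by
    have := div_pos (by linarith : 0 < m + 3) (by linarith : 0 < m - 3)
    positivity
  refine ⟨2 * ((m + 3) / (m - 3)), hC, fun t ξ hmW => ?_⟩
  set W := 1 + ‖t‖ ^ 2 with hW
  have hfactor : (W + 3) / (W - 3) ≤ (m + 3) / (m - 3) := add_three_div_sub_three_le hm hmW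
  have hfactor_pos : 0 < (W + 3) / (W - 3) := div_pos (by positivity) (by linarith)
  have hq : 0 ≤ ⟪t, ξ⟫ ^ 2 / (‖t‖ ^ 2 * W) := by positivity
  have hextra : 2 * (W + 3) * ⟪t, ξ⟫ ^ 2 / ((W - 1) * (W - 3) * W) =
      2 * ((W + 3) / (W - 3)) * (⟪t, ξ⟫ ^ 2 / (‖t‖ ^ 2 * W)) := by
    rw [hW, add_sub_cancel_left]
    simp only [div_eq_mul_inv, mul_inv]
    ring
  have hcoeff : 2 * (W + 3) / ((W - 1) * (W - 3)) * (⟪t, ξ⟫ ^ 2 / W) =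
      2 * (W + 3) * ⟪t, ξ⟫ ^ 2 / ((W - 1) * (W - 3) * W) := by
    rw [div_mul_div_comm, mul_assoc]
  have hbound : 2 * ((W + 3) / (W - 3)) * (⟪t, ξ⟫ ^ 2 / (‖t‖ ^ 2 * W)) ≤
      2 * ((m + 3) / (m - 3)) * (‖ξ‖ ^ 2 - ⟪t, ξ⟫ ^ 2 / W) := by
    gcongr
    exact inner_sq_div_le_norm_sq_sub t ξ
  rw [sum_sum_ite_sub_mul_mul, sum_sum_ite_sub_add_mul_mul, hcoeff, hextra]
  exact ⟨hbound, le_add_of_nonneg_right (by positivity), by linarith⟩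
end

section
/- Let f, g : ℝ → ℝ be smooth functions and for x, y ∈ ℝ set r = f'(x)², s = g'(y)², λ(x,y) = 8r + 2r(r+s) + (1+s)(r+s)(r+s−2), and μ(x,y) = 8s + 2s(r+s) + (1+r)(r+s)(r+s−2). If λ(x,y) f''(x) + μ(x,y) g''(y) = 0 for all (x,y) ∈ ℝ², then f'' ≡ 0 and g'' ≡ 0; that is, f and g are affine functions, and the translation surface (x¹, x², f(x¹) + g(x²)) is a plane. -/
open Polynomial Set

private lemma poly5 (c0 c1 c2 c3 c4 c5 : ℝ) (S : Set ℝ) (hS : S.Infinite)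
    (h : ∀ s ∈ S, c0 + c1*s + c2*s^2 + c3*s^3 + c4*s^4 + c5*s^5 = 0) :
    c0 = 0 ∧ c1 = 0 ∧ c2 = 0 ∧ c3 = 0 ∧ c4 = 0 ∧ c5 = 0 := by
  set p : ℝ[X] := C c0 + C c1 * X + C c2 * X^2 + C c3 * X^3 + C c4 * X^4 + C c5 * X^5 with hp
  have hsub : S ⊆ {x | p.IsRoot x} := by
    intro s hs
    have hev : p.eval s = c0 + c1*s + c2*s^2 + c3*s^3 + c4*s^4 + c5*s^5 := by
      simp [hp]
    simpa [IsRoot, hev] using h s hs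
  have hp0 : p = 0 := p.eq_zero_of_infinite_isRoot (hS.mono hsub)
  have hc : ∀ n, p.coeff n = 0 := fun n => by rw [hp0]; simp
  refine ⟨?_, ?_, ?_, ?_, ?_, ?_⟩
  · simpa [hp, coeff_X_pow] using hc 0
  · simpa [hp, coeff_X_pow] using hc 1
  · simpa [hp, coeff_X_pow] using hc 2
  · simpa [hp, coeff_X_pow] using hc 3
  · simpa [hp, coeff_X_pow] using hc 4
  · simpa [hp, coeff_X_pow] using hc 5

private lemma uIcc_infinite {a b : ℝ} (h : a ≠ b) : (Set.uIcc a b).Infinite := by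
  rcases h.lt_or_gt with h | h
  · exact (Set.Icc_infinite h).mono (by rw [Set.uIcc_of_le h.le])
  · exact (Set.Icc_infinite h).mono (by rw [Set.uIcc_of_ge h.le])

/-- If `(f')²` is constant on an open interval around `x0`, then `f'' x0 = 0`. -/
private lemma deriv2_zero_of_sq_const {f : ℝ → ℝ} (hfc : Continuous (deriv f))
    {a b x0 : ℝ} (hx0 : x0 ∈ Set.Ioo a b)
    (hconst : ∀ x ∈ Set.Ioo a b, (deriv f x)^2 = (deriv f x0)^2) :
    deriv (deriv f) x0 = 0 := by
  set c := deriv f x0 with hc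
  have h1 : ∀ x ∈ Set.Ioo a b, deriv f x = c := by
    intro x hx
    have h2 : (deriv f x - c) * (deriv f x + c) = 0 := by
      have := hconst x hx; linear_combination this
    rcases mul_eq_zero.mp h2 with h3 | h3
    · linarith
    · -- deriv f x = -c
      by_cases hc0 : c = 0
      · rw [hc0] at h3 ⊢; linarith
      · -- IVT gives a zero of deriv f inside the interval; contradiction
        exfalso
        have hco : ContinuousOn (deriv f) (Set.uIcc x x0) := hfc.continuousOn
        have h0mem : (0:ℝ) ∈ Set.uIcc (deriv f x) (deriv f x0) := by
          have : deriv f x = -c := by linarith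
          rw [this, ← hc]
          rcases lt_or_gt_of_ne hc0 with h4 | h4
          · exact Set.mem_uIcc.mpr (Or.inr ⟨le_of_lt h4, by linarith⟩)
          · exact Set.mem_uIcc.mpr (Or.inl ⟨by linarith, le_of_lt h4⟩)
        obtain ⟨z, hz, hz0⟩ := intermediate_value_uIcc hco h0mem
        have hz0' : deriv f z = 0 := hz0
        have hzmem : z ∈ Set.Ioo a b :=
          Set.ordConnected_Ioo.uIcc_subset hx hx0 hz
        have := hconst z hzmem
        rw [hz0'] at this
        exact hc0 (by nlinarith)
  have hev : deriv f =ᶠ[nhds x0] (fun _ => c) :=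
    Filter.eventuallyEq_of_mem (Ioo_mem_nhds hx0.1 hx0.2) h1
  rw [hev.deriv_eq, deriv_const]

/-- If `f'' x0 ≠ 0`, the range of `(f')²` is infinite. -/
private lemma range_sq_infinite {f : ℝ → ℝ} (hfc : Continuous (deriv f))
    {x0 : ℝ} (hA : deriv (deriv f) x0 ≠ 0) :
    (Set.range (fun x => (deriv f x)^2)).Infinite := by
  by_contra hfin
  apply hA
  apply deriv2_zero_of_sq_const hfc (a := x0 - 1) (b := x0 + 1) (by constructor <;> linarith)
  intro x hx
  by_contra hne
  have hco : ContinuousOn (fun x => (deriv f x)^2) (Set.uIcc x x0) :=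
    ((hfc.pow 2).continuousOn)
  have hsub : Set.uIcc ((deriv f x)^2) ((deriv f x0)^2) ⊆
      Set.range (fun x => (deriv f x)^2) := by
    intro t ht
    obtain ⟨z, _, hz⟩ := intermediate_value_uIcc hco ht
    exact ⟨z, hz⟩
  exact hfin ((uIcc_infinite hne).mono hsub)

private lemma aux_main (f g : ℝ → ℝ) (hf : ContDiff ℝ (⊤ : ℕ∞) f) (hg : ContDiff ℝ (⊤ : ℕ∞) g)
    (hmin : ∀ x y : ℝ,
      (8 * (deriv f x) ^ 2 + 2 * (deriv f x) ^ 2 * ((deriv f x) ^ 2 + (deriv g y) ^ 2) +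
          (1 + (deriv g y) ^ 2) * ((deriv f x) ^ 2 + (deriv g y) ^ 2) *
            ((deriv f x) ^ 2 + (deriv g y) ^ 2 - 2)) * deriv (deriv f) x +
        (8 * (deriv g y) ^ 2 + 2 * (deriv g y) ^ 2 * ((deriv f x) ^ 2 + (deriv g y) ^ 2) +
          (1 + (deriv f x) ^ 2) * ((deriv f x) ^ 2 + (deriv g y) ^ 2) *
            ((deriv f x) ^ 2 + (deriv g y) ^ 2 - 2)) * deriv (deriv g) y = 0) :
    ∀ x : ℝ, deriv (deriv f) x = 0 := by
  have hf1 : ContDiff ℝ (⊤:ℕ∞) (deriv f) := (contDiff_infty_iff_deriv.mp (hf.of_le (by simp))).2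
  have hg1 : ContDiff ℝ (⊤:ℕ∞) (deriv g) := (contDiff_infty_iff_deriv.mp (hg.of_le (by simp))).2
  have hfc : Continuous (deriv f) := hf1.continuous
  have hgc : Continuous (deriv g) := hg1.continuous
  have hAc : Continuous (deriv (deriv f)) := ((contDiff_infty_iff_deriv.mp hf1).2).continuous
  by_contra hex
  push_neg at hex
  obtain ⟨x0, hx0⟩ := hex
  by_cases hey : ∃ y0, deriv (deriv g) y0 ≠ 0
  · -- Main case: both second derivatives are somewhere nonzero.
    obtain ⟨y0, hy0⟩ := hey
    set r0 := (deriv f x0)^2 with hr0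
    set s0 := (deriv g y0)^2 with hs0
    set A0 := deriv (deriv f) x0 with hA0
    set B0 := deriv (deriv g) y0 with hB0
    have hRinf := range_sq_infinite hfc hx0
    have hSinf := range_sq_infinite hgc hy0
    -- the fundamental polynomial identity E(ρ,σ) = 0
    have key : ∀ ρ ∈ Set.range (fun x => (deriv f x)^2),
        ∀ σ ∈ Set.range (fun y => (deriv g y)^2),
        B0 * (8*ρ + 2*ρ*(ρ+σ) + (1+σ)*(ρ+σ)*(ρ+σ-2))
           * (8*s0 + 2*s0*(ρ+s0) + (1+ρ)*(ρ+s0)*(ρ+s0-2))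
           * (8*σ + 2*σ*(r0+σ) + (1+r0)*(r0+σ)*(r0+σ-2))
        + A0 * (8*σ + 2*σ*(ρ+σ) + (1+ρ)*(ρ+σ)*(ρ+σ-2))
           * (8*r0 + 2*r0*(r0+σ) + (1+σ)*(r0+σ)*(r0+σ-2))
           * (8*ρ + 2*ρ*(ρ+s0) + (1+s0)*(ρ+s0)*(ρ+s0-2)) = 0 := by
      rintro ρ ⟨x, rfl⟩ σ ⟨y, rfl⟩
      have h1 := hmin x y
      have h2 := hmin x y0
      have h3 := hmin x0 y
      set u := (deriv f x)^2
      set v := (deriv g y)^2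
      set A := deriv (deriv f) x
      set B := deriv (deriv g) y
      -- λ(u,v)*M2(v)*h2-coeffs etc.
      linear_combination
        ((8*u + 2*u*(u+v) + (1+v)*(u+v)*(u+v-2)) *
          (8*v + 2*v*(r0+v) + (1+r0)*(r0+v)*(r0+v-2))) * h2
        + ((8*v + 2*v*(u+v) + (1+u)*(u+v)*(u+v-2)) *
          (8*u + 2*u*(u+s0) + (1+s0)*(u+s0)*(u+s0-2))) * h3
        - ((8*u + 2*u*(u+s0) + (1+s0)*(u+s0)*(u+s0-2)) *
          (8*v + 2*v*(r0+v) + (1+r0)*(r0+v)*(r0+v-2))) * h1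
    -- extract the σ^5 coefficient: for every ρ in the range it vanishes
    have key5 : ∀ ρ ∈ Set.range (fun x => (deriv f x)^2),
        B0 * (8*s0 + 2*s0*(ρ+s0) + (1+ρ)*(ρ+s0)*(ρ+s0-2)) * (r0+3)
        + A0 * (8*ρ + 2*ρ*(ρ+s0) + (1+s0)*(ρ+s0)*(ρ+s0-2)) * (ρ+3) = 0 := by
      intro ρ hρ
      have m1 := B0 * (8*s0 + 2*s0*(ρ+s0) + (1+ρ)*(ρ+s0)*(ρ+s0-2))
      set M1 := B0 * (8*s0 + 2*s0*(ρ+s0) + (1+ρ)*(ρ+s0)*(ρ+s0-2)) with hM1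
      set L1 := A0 * (8*ρ + 2*ρ*(ρ+s0) + (1+s0)*(ρ+s0)*(ρ+s0-2)) with hL1
      have hco := poly5
        (M1*((3*ρ^2+6*ρ)*(r0^3-r0^2-2*r0)) + L1*((ρ^3-ρ^2-2*ρ)*(3*r0^2+6*r0)))
        (M1*((3*ρ^2+6*ρ)*(2*r0^2+2*r0+6) + (ρ^2+2*ρ-2)*(r0^3-r0^2-2*r0))
          + L1*((ρ^3-ρ^2-2*ρ)*(r0^2+2*r0-2) + (2*ρ^2+2*ρ+6)*(3*r0^2+6*r0)))
        (M1*((3*ρ^2+6*ρ)*(r0+3) + (ρ^2+2*ρ-2)*(2*r0^2+2*r0+6) + (2*ρ-1)*(r0^3-r0^2-2*r0))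
          + L1*((ρ^3-ρ^2-2*ρ)*(2*r0-1) + (2*ρ^2+2*ρ+6)*(r0^2+2*r0-2) + (ρ+3)*(3*r0^2+6*r0)))
        (M1*((ρ^2+2*ρ-2)*(r0+3) + (2*ρ-1)*(2*r0^2+2*r0+6) + (r0^3-r0^2-2*r0))
          + L1*((ρ^3-ρ^2-2*ρ) + (2*ρ^2+2*ρ+6)*(2*r0-1) + (ρ+3)*(r0^2+2*r0-2)))
        (M1*((2*ρ-1)*(r0+3) + (2*r0^2+2*r0+6)) + L1*((2*ρ^2+2*ρ+6) + (ρ+3)*(2*r0-1)))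
        (M1*(r0+3) + L1*(ρ+3))
        _ hSinf
        (by
          intro σ hσ
          have := key ρ hρ σ hσ
          linear_combination this)
      linear_combination hco.2.2.2.2.2
    -- now c5(ρ) is a cubic in ρ vanishing on an infinite set
    have hdd := poly5
      (B0*(r0+3)*(3*s0^2+6*s0) + A0*3*(s0^3-s0^2-2*s0))
      (B0*(r0+3)*(s0^2+2*s0-2) + A0*((s0^3-s0^2-2*s0) + 3*(2*s0^2+2*s0+6)))
      (B0*(r0+3)*(2*s0-1) + A0*((2*s0^2+2*s0+6) + 3*(s0+3)))
      (B0*(r0+3) + A0*(s0+3))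
      0 0 _ hRinf
      (by
        intro ρ hρ
        have := key5 ρ hρ
        linear_combination this)
    have hd2 := hdd.2.2.1
    have hd3 := hdd.2.2.2.1
    have : (18:ℝ) * A0 = 0 := by linear_combination hd2 - (2*s0-1)*hd3
    exact hx0 (by linarith)
  · -- g'' ≡ 0; then λ(r(x), s0) * f''(x) = 0 for all x.
    push_neg at hey
    set s0 := (deriv g 0)^2 with hs0
    have h2 : ∀ x : ℝ,
        (8 * (deriv f x)^2 + 2 * (deriv f x)^2 * ((deriv f x)^2 + s0) +
          (1 + s0) * ((deriv f x)^2 + s0) * ((deriv f x)^2 + s0 - 2)) *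
          deriv (deriv f) x = 0 := by
      intro x
      have h := hmin x 0
      rw [hey 0] at h
      linear_combination h
    -- find an open interval around x0 where f'' ≠ 0
    have hU : {x : ℝ | deriv (deriv f) x ≠ 0} ∈ nhds x0 :=
      (isOpen_ne_fun hAc continuous_const).mem_nhds hx0
    obtain ⟨ε, hε, hball⟩ := Metric.mem_nhds_iff.mp hU
    rw [Real.ball_eq_Ioo] at hball
    have hquad : ∀ x ∈ Set.Ioo (x0-ε) (x0+ε),
        (s0^3 - s0^2 - 2*s0) + (2*s0^2+2*s0+6) * ((deriv f x)^2)
          + (s0+3) * ((deriv f x)^2)^2 = 0 := by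
      intro x hx
      have hAx : deriv (deriv f) x ≠ 0 := hball hx
      have h3 := h2 x
      have h4 : (8 * (deriv f x)^2 + 2 * (deriv f x)^2 * ((deriv f x)^2 + s0) +
          (1 + s0) * ((deriv f x)^2 + s0) * ((deriv f x)^2 + s0 - 2)) = 0 :=
        by
          rcases mul_eq_zero.mp h3 with h | h
          · exact h
          · exact absurd h hAx
      linear_combination h4
    -- r is constant on the interval
    have hconst : ∀ x ∈ Set.Ioo (x0-ε) (x0+ε), (deriv f x)^2 = (deriv f x0)^2 := by
      intro x hx
      by_contra hne
      have hx0mem : x0 ∈ Set.Ioo (x0-ε) (x0+ε) := by constructor <;> linarith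
      have hco : ContinuousOn (fun x => (deriv f x)^2) (Set.uIcc x x0) :=
        (hfc.pow 2).continuousOn
      have hroots : ∀ t ∈ Set.uIcc ((deriv f x)^2) ((deriv f x0)^2),
          (s0^3 - s0^2 - 2*s0) + (2*s0^2+2*s0+6) * t + (s0+3) * t^2 + 0*t^3 + 0*t^4 + 0*t^5 = 0 := by
        intro t ht
        obtain ⟨z, hz, hzt⟩ := intermediate_value_uIcc hco ht
        have hzmem : z ∈ Set.Ioo (x0-ε) (x0+ε) :=
          Set.ordConnected_Ioo.uIcc_subset hx hx0mem hz
        have hzt' : deriv f z ^ 2 = t := hzt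
        have := hquad z hzmem
        rw [hzt'] at this
        linear_combination this
      have hco2 := poly5 (s0^3 - s0^2 - 2*s0) (2*s0^2+2*s0+6) (s0+3) 0 0 0
        _ (uIcc_infinite hne) hroots
      have : s0 + 3 = 0 := hco2.2.2.1
      have : (0:ℝ) ≤ s0 := sq_nonneg _
      linarith [hco2.2.2.1]
    exact hx0 (deriv2_zero_of_sq_const hfc (by constructor <;> linarith) hconst)

private lemma affine_of_deriv2_zero (f : ℝ → ℝ) (hf : ContDiff ℝ (⊤ : ℕ∞) f)
    (h : ∀ x, deriv (deriv f) x = 0) : ∀ x : ℝ, f x = (deriv f 0) * x + f 0 := by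
  have hfd : Differentiable ℝ f := (contDiff_infty_iff_deriv.mp (hf.of_le (by simp))).1
  have hf1 : ContDiff ℝ (⊤:ℕ∞) (deriv f) := (contDiff_infty_iff_deriv.mp (hf.of_le (by simp))).2
  have hf1d : Differentiable ℝ (deriv f) := (contDiff_infty_iff_deriv.mp hf1).1
  have hcst : ∀ x, deriv f x = deriv f 0 := fun x => is_const_of_deriv_eq_zero hf1d h x 0
  set a := deriv f 0 with ha
  intro x
  have hF : ∀ z, deriv (fun w => f w - a * w) z = 0 := by
    intro z
    rw [deriv_fun_sub (hfd z) (by fun_prop)]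
    have : deriv (fun w => a * w) z = a := by
      have hd := (hasDerivAt_id z).const_mul a
      simpa using hd.deriv
    rw [this, hcst z]; ring
  have h0 : f x - a * x = f 0 - a * 0 := is_const_of_deriv_eq_zero
    (fun z => ((hfd z).sub (by fun_prop))) hF x 0
  linear_combination h0

/-- Theorem 1.3: if smooth `f, g` satisfy `λ f'' + μ g'' = 0`, with
`r = f'(x)²`, `s = g'(y)²`, `λ = 8r + 2r(r+s) + (1+s)(r+s)(r+s-2)` and
`μ = 8s + 2s(r+s) + (1+r)(r+s)(r+s-2)`, for all `(x,y)`, then `f'' ≡ 0`, `g'' ≡ 0`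
and `f`, `g` are affine: the minimal translation surface is a plane. -/
theorem stmt_8 (f g : ℝ → ℝ) (hf : ContDiff ℝ (⊤ : ℕ∞) f) (hg : ContDiff ℝ (⊤ : ℕ∞) g)
    (hmin : ∀ x y : ℝ,
      (8 * (deriv f x) ^ 2 + 2 * (deriv f x) ^ 2 * ((deriv f x) ^ 2 + (deriv g y) ^ 2) +
          (1 + (deriv g y) ^ 2) * ((deriv f x) ^ 2 + (deriv g y) ^ 2) *
            ((deriv f x) ^ 2 + (deriv g y) ^ 2 - 2)) * deriv (deriv f) x +
        (8 * (deriv g y) ^ 2 + 2 * (deriv g y) ^ 2 * ((deriv f x) ^ 2 + (deriv g y) ^ 2) +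
          (1 + (deriv f x) ^ 2) * ((deriv f x) ^ 2 + (deriv g y) ^ 2) *
            ((deriv f x) ^ 2 + (deriv g y) ^ 2 - 2)) * deriv (deriv g) y = 0) :
    (∀ x : ℝ, deriv (deriv f) x = 0) ∧ (∀ y : ℝ, deriv (deriv g) y = 0) ∧
    ∃ a b c e : ℝ, (∀ x : ℝ, f x = a * x + b) ∧ (∀ y : ℝ, g y = c * y + e) := by
  have keyf : ∀ x, deriv (deriv f) x = 0 := aux_main f g hf hg hmin
  have keyg : ∀ y, deriv (deriv g) y = 0 :=
    aux_main g f hg hf (fun y x => by linear_combination hmin x y)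
  exact ⟨keyf, keyg, deriv f 0, f 0, deriv g 0, g 0,
    affine_of_deriv2_zero f hf keyf, affine_of_deriv2_zero g hg keyg⟩
end

section
/- Let I ⊆ ℝ be a nonempty open interval and let K, L : I → ℝ be twice continuously differentiable functions with K(p) ≠ 0 and L(p) ≠ 0 for all p ∈ I. If K and L satisfy on I the two equations K''L³ − K L² L'' − 2K'L'L² + 2K L L'² = 0 and −K''K²L + K³L'' − 2K'K²L' + 2K'²KL − 2KL³ = 0, then the function K/L satisfies ((K/L)'(p))² = 1 for all p ∈ I. -/
/-!
Since `(K/L)' = (K'L - KL')/L²`, the claim is `(K'L - KL')² = L⁴`. This is pointwise algebra: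
`K²·(5.21) + L²·(5.22) = 2KL((K'L - KL')² - L⁴)`, and `2KL ≠ 0`.
-/

lemma sq_wronskian_eq_pow_four {F : Type*} [Field F] [NeZero (2 : F)] {k l k' l' k'' l'' : F}
    (hk : k ≠ 0) (hl : l ≠ 0)
    (h₁ : k'' * l ^ 3 - k * l ^ 2 * l'' - 2 * k' * l' * l ^ 2 + 2 * k * l * l' ^ 2 = 0)
    (h₂ : -k'' * k ^ 2 * l + k ^ 3 * l'' - 2 * k' * k ^ 2 * l' + 2 * k' ^ 2 * k * l
      - 2 * k * l ^ 3 = 0) :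
    (k' * l - k * l') ^ 2 = l ^ 4 := by
  have h : 2 * k * l * ((k' * l - k * l') ^ 2 - l ^ 4) = 0 := by
    linear_combination k ^ 2 * h₁ + l ^ 2 * h₂
  have h2kl : 2 * k * l ≠ 0 := mul_ne_zero (mul_ne_zero two_ne_zero hk) hl
  exact sub_eq_zero.mp ((mul_eq_zero.mp h).resolve_left h2kl)

lemma sq_deriv_div_eq_one {K L : ℝ → ℝ} {p : ℝ} (hK : DifferentiableAt ℝ K p)
    (hL : DifferentiableAt ℝ L p) (hLp : L p ≠ 0)
    (h : (deriv K p * L p - K p * deriv L p) ^ 2 = L p ^ 4) :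
    deriv (fun x => K x / L x) p ^ 2 = 1 := by
  rw [deriv_fun_div hK hL hLp, div_pow, h, ← pow_mul]
  exact div_self (pow_ne_zero _ hLp)

theorem stmt_10_general (I : Set ℝ) (hIopen : IsOpen I)
    (K L : ℝ → ℝ) (hK : ContDiffOn ℝ 2 K I) (hL : ContDiffOn ℝ 2 L I)
    (hK0 : ∀ p ∈ I, K p ≠ 0) (hL0 : ∀ p ∈ I, L p ≠ 0)
    (heq1 : ∀ p ∈ I,
      deriv (deriv K) p * L p ^ 3 - K p * L p ^ 2 * deriv (deriv L) p -
        2 * deriv K p * deriv L p * L p ^ 2 + 2 * K p * L p * (deriv L p) ^ 2 = 0)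
    (heq2 : ∀ p ∈ I,
      -(deriv (deriv K) p) * K p ^ 2 * L p + K p ^ 3 * deriv (deriv L) p -
        2 * deriv K p * K p ^ 2 * deriv L p + 2 * (deriv K p) ^ 2 * K p * L p -
        2 * K p * L p ^ 3 = 0) :
    ∀ p ∈ I, (deriv (fun x => K x / L x) p) ^ 2 = 1 := by
  intro p hp
  have hKd : DifferentiableAt ℝ K p :=
    (hK.differentiableOn two_ne_zero p hp).differentiableAt (hIopen.mem_nhds hp)
  have hLd : DifferentiableAt ℝ L p :=
    (hL.differentiableOn two_ne_zero p hp).differentiableAt (hIopen.mem_nhds hp)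
  exact sq_deriv_div_eq_one hKd hLd (hL0 p hp)
    (sq_wronskian_eq_pow_four (hK0 p hp) (hL0 p hp) (heq1 p hp) (heq2 p hp))

/-- Equations (5.21)-(5.22) imply (5.23): if nonvanishing `K, L` satisfy
`K''L³ - K L² L'' - 2K'L'L² + 2K L L'² = 0` and
`-K''K²L + K³L'' - 2K'K²L' + 2K'²KL - 2KL³ = 0` on a nonempty open interval `I`,
then `((K/L)')² = 1` on `I`. -/
theorem stmt_10 (I : Set ℝ) (hIopen : IsOpen I) (hIne : I.Nonempty) (hIord : I.OrdConnected)
    (K L : ℝ → ℝ) (hK : ContDiffOn ℝ 2 K I) (hL : ContDiffOn ℝ 2 L I)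
    (hK0 : ∀ p ∈ I, K p ≠ 0) (hL0 : ∀ p ∈ I, L p ≠ 0)
    (heq1 : ∀ p ∈ I,
      deriv (deriv K) p * L p ^ 3 - K p * L p ^ 2 * deriv (deriv L) p -
        2 * deriv K p * deriv L p * L p ^ 2 + 2 * K p * L p * (deriv L p) ^ 2 = 0)
    (heq2 : ∀ p ∈ I,
      -(deriv (deriv K) p) * K p ^ 2 * L p + K p ^ 3 * deriv (deriv L) p -
        2 * deriv K p * K p ^ 2 * deriv L p + 2 * (deriv K p) ^ 2 * K p * L p -
        2 * K p * L p ^ 3 = 0) :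
    ∀ p ∈ I, (deriv (fun x => K x / L x) p) ^ 2 = 1 :=
  stmt_10_general I hIopen K L hK hL hK0 hL0 heq1 heq2
end

section
/- Define the polynomials K(p) = 4p + p² + p(p − 2) + (1/2)p²(p − 2) and L(p) = (1/2)p(p − 2) − p − 4. There is no nonempty open interval I ⊆ ℝ with L(p) ≠ 0 for all p ∈ I on which ((K/L)'(p))² = 1 holds identically; i.e., the derivative of K/L cannot be identically 1 or identically −1 on any nonempty open interval avoiding the zeros of L. -/
/-!
`K/L` is a rational function, so on an interval where `L ≠ 0` the identity `((K/L)')² = 1`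
says that the polynomial `(K'L - KL')² - L⁴` vanishes there. A real polynomial vanishing on a
nonempty open set is zero, but this one takes the value `-192` at `0`.
-/

open Polynomial

theorem Polynomial.eq_zero_of_forall_isRoot_of_isOpen {P : ℝ[X]} {U : Set ℝ} (hU : IsOpen U)
    (hne : U.Nonempty) (h : ∀ x ∈ U, P.IsRoot x) : P = 0 := by
  obtain ⟨x, hx⟩ := hne
  obtain ⟨ε, hε, hball⟩ := Metric.isOpen_iff.1 hU x hx
  refine P.eq_zero_of_infinite_isRoot ((Set.Ioo_infinite (by linarith : x - ε < x + ε)).mono ?_)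
  rw [← Real.ball_eq_Ioo]
  exact fun y hy => h y (hball hy)

theorem Polynomial.isRoot_of_sq_deriv_div_eq_one {P Q : ℝ[X]} {x : ℝ} (hQ : Q.eval x ≠ 0)
    (h : deriv (fun y => P.eval y / Q.eval y) x ^ 2 = 1) :
    ((derivative P * Q - P * derivative Q) ^ 2 - Q ^ 4).IsRoot x := by
  rw [deriv_fun_div P.differentiableAt Q.differentiableAt hQ, Polynomial.deriv, Polynomial.deriv,
    div_pow, div_eq_one_iff_eq (by positivity)] at h
  simp only [IsRoot, eval_sub, eval_pow, eval_mul]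
  linear_combination h

/-- For the explicit polynomials `K(p) = 4p + p² + p(p-2) + (1/2)p²(p-2)` and
`L(p) = (1/2)p(p-2) - p - 4`, there is no nonempty open interval avoiding the zeros
of `L` on which `((K/L)')² = 1` holds identically. -/
theorem stmt_11 (K L : ℝ → ℝ)
    (hK : ∀ p : ℝ, K p = 4 * p + p ^ 2 + p * (p - 2) + (1 / 2) * p ^ 2 * (p - 2))
    (hL : ∀ p : ℝ, L p = (1 / 2) * p * (p - 2) - p - 4) :
    ¬ ∃ I : Set ℝ, IsOpen I ∧ I.Nonempty ∧ I.OrdConnected ∧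
      (∀ p ∈ I, L p ≠ 0) ∧
      ∀ p ∈ I, (deriv (fun x => K x / L x) p) ^ 2 = 1 := by
  rintro ⟨I, hIopen, hIne, -, hLne, hder⟩
  set P : ℝ[X] := 4 * X + X ^ 2 + X * (X - 2) + C (1 / 2) * X ^ 2 * (X - 2)
  set Q : ℝ[X] := C (1 / 2) * X * (X - 2) - X - 4
  obtain rfl : K = fun x => P.eval x := funext fun x => by simp [P, hK]
  obtain rfl : L = fun x => Q.eval x := funext fun x => by simp [Q, hL]
  have hzero : (derivative P * Q - P * derivative Q) ^ 2 - Q ^ 4 = 0 :=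
    eq_zero_of_forall_isRoot_of_isOpen hIopen hIne fun x hx =>
      isRoot_of_sq_deriv_div_eq_one (hLne x hx) (hder x hx)
  have := congrArg (eval 0) hzero
  norm_num [P, Q] at this
end
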